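/- Let S be a pseudosymmetric numerical semigroup with Frobenius number g. Then S ∪ {g} is the unique minimal element of (G₀(S), ≤⋆); that is, S ∪ {g} is ⋆_J-closed for every J ∈ G₀(S). -/
import Mathlib


/-- A numerical semigroup: a subset of ℕ containing 0, closed under addition,
with finite complement. -/
structure NumSgp where
  carrier : Set ℕ
  zero_mem : 0 ∈ carrier
  add_mem : ∀ a ∈ carrier, ∀ b ∈ carrier, a + b ∈ carrier
  cofinite : carrierᶜ.Finite

/-- The copy of `S` inside ℤ. -/
def natS (S : NumSgp) : Set ℤ := (fun n : ℕ => (n : ℤ)) '' S.carrier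

/-- A fractional ideal of `S`: a nonempty subset of ℤ, bounded below, with `I + S ⊆ I`. -/
def IsFracIdeal (S : NumSgp) (I : Set ℤ) : Prop :=
  I.Nonempty ∧ BddBelow I ∧ ∀ i ∈ I, ∀ s ∈ natS S, i + s ∈ I

/-- `(I − J) = {x ∈ ℤ : x + J ⊆ I}`. -/
def idealSub (I J : Set ℤ) : Set ℤ := {x : ℤ | ∀ j ∈ J, x + j ∈ I}

/-- `F₀(S)`: fractional ideals `I` with `S ⊆ I ⊆ ℕ` (hence with minimal element 0). -/
def F0 (S : NumSgp) : Set (Set ℤ) :=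
  {I | IsFracIdeal S I ∧ natS S ⊆ I ∧ I ⊆ {x : ℤ | 0 ≤ x}}

/-- The `v`-operation (divisorial closure): `I ↦ (S − (S − I))`. -/
def vOp (S : NumSgp) (I : Set ℤ) : Set ℤ := idealSub (natS S) (idealSub (natS S) I)

/-- An ideal is divisorial if it is `v`-closed. -/
def Divisorial (S : NumSgp) (I : Set ℤ) : Prop := vOp S I = I

/-- `G₀(S)`: the nondivisorial ideals in `F₀(S)`. -/
def G0 (S : NumSgp) : Set (Set ℤ) := {I | I ∈ F0 S ∧ ¬ Divisorial S I}

/-- The action of the star operation `⋆_I` generated by `I`: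
`J ↦ J^{⋆_I} = J^v ∩ (I − (I − J))`. -/
def starI (S : NumSgp) (I J : Set ℤ) : Set ℤ := vOp S J ∩ idealSub I (idealSub I J)

/-- The action of the star operation `⋆_Δ = inf_{I ∈ Δ} ⋆_I` generated by a set `Δ` of ideals:
`J ↦ J^{⋆_Δ} = J^v ∩ ⋂_{I ∈ Δ} (I − (I − J))`. -/
def starD (S : NumSgp) (Δ : Set (Set ℤ)) (J : Set ℤ) : Set ℤ :=
  vOp S J ∩ ⋂ I ∈ Δ, idealSub I (idealSub I J)

/-- The ⋆-order: `I ≤⋆ J` iff `I` is `⋆_J`-closed. -/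
def starle (S : NumSgp) (I J : Set ℤ) : Prop := starI S J I = I

/-- A star operation on `S`, given by its action on subsets of ℤ; it is normalized to be
the identity outside the fractional ideals, so that two star operations are equal iff they
agree on all fractional ideals. -/
structure StarOp (S : NumSgp) where
  toFun : Set ℤ → Set ℤ
  isFrac : ∀ I, IsFracIdeal S I → IsFracIdeal S (toFun I)
  subset_star : ∀ I, IsFracIdeal S I → I ⊆ toFun I
  mono : ∀ I J, IsFracIdeal S I → IsFracIdeal S J → I ⊆ J → toFun I ⊆ toFun J
  idem : ∀ I, IsFracIdeal S I → toFun (toFun I) = toFun I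
  transl : ∀ I, IsFracIdeal S I → ∀ a : ℤ,
    toFun ((fun x => a + x) '' I) = (fun x => a + x) '' toFun I
  star_S : toFun (natS S) = natS S
  default_eq : ∀ I, ¬ IsFracIdeal S I → toFun I = I

/-- The order on star operations: `s ≤ t` iff `I^s ⊆ I^t` for every fractional ideal `I`. -/
def StarOp.le {S : NumSgp} (s t : StarOp S) : Prop :=
  ∀ I, IsFracIdeal S I → s.toFun I ⊆ t.toFun I

/-- A star operation `s` is prime if whenever `s ≥ t ∧ u` (the infimum of two star operations
being given by `I ↦ I^t ∩ I^u`), then `s ≥ t` or `s ≥ u`. -/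
def StarOp.IsPrime {S : NumSgp} (s : StarOp S) : Prop :=
  ∀ t u : StarOp S,
    (∀ I, IsFracIdeal S I → t.toFun I ∩ u.toFun I ⊆ s.toFun I) →
    t.le s ∨ u.le s

/-- `I ∈ F₀(S)` is an atom if the star operation `⋆_I` is prime. -/
def AtomIdeal (S : NumSgp) (I : Set ℤ) : Prop :=
  I ∈ F0 S ∧ ∀ t u : StarOp S,
    (∀ J, IsFracIdeal S J → t.toFun J ∩ u.toFun J ⊆ starI S I J) →
    (∀ J, IsFracIdeal S J → t.toFun J ⊆ starI S I J) ∨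
    (∀ J, IsFracIdeal S J → u.toFun J ⊆ starI S I J)

/-- `M_a = {x ∈ ℕ : a − x ∉ S}`, the biggest ideal in `F₀(S)` not containing `a`. -/
def Mdual (S : NumSgp) (a : ℕ) : Set ℤ := {x : ℤ | 0 ≤ x ∧ ((a : ℤ) - x) ∉ natS S}

/-- `Q_a(S) = {I ∈ F₀(S) : a = sup(ℕ \ I), a ∈ I^v}`. -/
def Qa (S : NumSgp) (a : ℕ) : Set (Set ℤ) :=
  {I | I ∈ F0 S ∧ (a : ℤ) ∉ I ∧ (∀ x : ℤ, (a : ℤ) < x → x ∈ I) ∧ (a : ℤ) ∈ vOp S I}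

/-- The number of antichains (with respect to inclusion) of a family of ideals. -/
noncomputable def numInclAnti (Q : Set (Set ℤ)) : ℕ :=
  Set.ncard {Δ : Set (Set ℤ) | Δ ⊆ Q ∧ IsAntichain (· ⊆ ·) Δ}

/-- The `n`-th Dedekind number: the number of antichains of the power set of an
`n`-element set, ordered by inclusion. -/
noncomputable def dedekind (n : ℕ) : ℕ :=
  Nat.card {A : Set (Set (Fin n)) // IsAntichain (· ⊆ ·) A}

/-- `T(S) = (S − M_S) \ S`. -/
def Tset (S : NumSgp) : Set ℤ :=
  idealSub (natS S) ((fun n : ℕ => (n : ℤ)) '' (S.carrier \ {0})) \ natS S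

/-- The type `t(S) = |T(S)|`. -/
noncomputable def typeNum (S : NumSgp) : ℕ := (Tset S).ncard

/-- The Frobenius number `g(S)`: the largest integer not in `S`. -/
noncomputable def frob (S : NumSgp) : ℕ := sSup S.carrierᶜ

/-- The multiplicity `μ(S)`: the smallest nonzero element of `S`. -/
noncomputable def multNum (S : NumSgp) : ℕ := sInf (S.carrier \ {0})

/-- The degree of singularity `δ(S) = |ℕ \ S|`. -/
noncomputable def deltaNum (S : NumSgp) : ℕ := S.carrierᶜ.ncard

/-- `S` is symmetric if `g(S) − a ∈ S` for every `a ∈ ℕ \ S`. -/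
def IsSymmetricSgp (S : NumSgp) : Prop :=
  ∀ a : ℕ, a ∉ S.carrier → ((frob S : ℤ) - (a : ℤ)) ∈ natS S


section PseudoSymHelpers

variable {S : NumSgp}

lemma natS_zero (S : NumSgp) : (0:ℤ) ∈ natS S := ⟨0, S.zero_mem, rfl⟩

lemma natS_nonneg {x : ℤ} (hx : x ∈ natS S) : 0 ≤ x := by
  obtain ⟨n, _, rfl⟩ := hx; exact Int.natCast_nonneg n

lemma natS_add {a b : ℤ} (ha : a ∈ natS S) (hb : b ∈ natS S) : a + b ∈ natS S := by
  obtain ⟨n, hn, rfl⟩ := ha; obtain ⟨m, hm, rfl⟩ := hb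
  exact ⟨n + m, S.add_mem n hn m hm, by push_cast; ring⟩

lemma mem_gt_frob {x : ℤ} (hx : (frob S : ℤ) < x) : x ∈ natS S := by
  have hx0 : (0:ℤ) ≤ x := le_trans (Int.natCast_nonneg _) hx.le
  obtain ⟨n, rfl⟩ := Int.eq_ofNat_of_zero_le hx0
  refine ⟨n, ?_, rfl⟩
  by_contra hn
  have h1 : n ≤ frob S := le_csSup (S.cofinite.bddAbove) hn
  exact absurd hx (by exact_mod_cast not_lt.mpr h1)

lemma gap_le_frob {x : ℤ} (hx0 : 0 ≤ x) (hx : x ∉ natS S) : x ≤ (frob S : ℤ) := by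
  by_contra hc
  exact hx (mem_gt_frob (by omega))

/-- Abbreviation for the image of `M_S` in ℤ. -/
def Mimg (S : NumSgp) : Set ℤ := (fun n : ℕ => (n : ℤ)) '' (S.carrier \ {0})

lemma mem_Mimg {m : ℤ} (hm : m ∈ natS S) (hm0 : m ≠ 0) : m ∈ Mimg S := by
  obtain ⟨n, hn, rfl⟩ := hm
  have hn0 : n ≠ 0 := fun h => hm0 (by simp [h])
  exact ⟨n, ⟨hn, hn0⟩, rfl⟩

lemma Mimg_subset {m : ℤ} (hm : m ∈ Mimg S) : m ∈ natS S ∧ 1 ≤ m := by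
  obtain ⟨n, ⟨hn, hn0⟩, rfl⟩ := hm
  have hn0' : n ≠ 0 := hn0
  refine ⟨⟨n, hn, rfl⟩, ?_⟩
  show (1:ℤ) ≤ (n:ℤ)
  exact_mod_cast Nat.one_le_iff_ne_zero.mpr hn0'

lemma mem_Tset_iff {t : ℤ} :
    t ∈ Tset S ↔ (∀ m ∈ Mimg S, t + m ∈ natS S) ∧ t ∉ natS S := Iff.rfl

lemma not_T_witness {a : ℤ} (hna : a ∉ natS S) (hT : a ∉ Tset S) :
    ∃ m ∈ Mimg S, a + m ∉ natS S := by
  have hP : ¬ ∀ m ∈ Mimg S, a + m ∈ natS S := fun hp => hT ⟨hp, hna⟩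
  push_neg at hP
  exact hP

/-- Every gap can be raised, within gaps, into `T(S)`. -/
lemma reach_T : ∀ n : ℕ, ∀ a : ℤ, 0 ≤ a → a ∉ natS S →
    ((frob S : ℤ) - a).toNat ≤ n → ∃ t ∈ Tset S, t - a ∈ natS S := by
  intro n
  induction n with
  | zero =>
    intro a ha hna hle
    have hag : a ≤ (frob S : ℤ) := gap_le_frob ha hna
    have haeq : a = (frob S : ℤ) := by omega
    by_cases hT : a ∈ Tset S
    · exact ⟨a, hT, by simpa using natS_zero S⟩
    · exfalso
      obtain ⟨m, hm, hfm⟩ := not_T_witness hna hT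
      obtain ⟨hmS, hm1⟩ := Mimg_subset hm
      exact hfm (mem_gt_frob (by omega))
  | succ n ih =>
    intro a ha hna hle
    by_cases hT : a ∈ Tset S
    · exact ⟨a, hT, by simpa using natS_zero S⟩
    · obtain ⟨m, hm, hfm⟩ := not_T_witness hna hT
      obtain ⟨hmS, hm1⟩ := Mimg_subset hm
      have ham : a + m ≤ (frob S : ℤ) := gap_le_frob (by omega) hfm
      obtain ⟨t, ht, hts⟩ := ih (a + m) (by omega) hfm (by omega)
      refine ⟨t, ht, ?_⟩
      have h2 := natS_add hts hmS
      have he : t - (a + m) + m = t - a := by ring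
      rwa [he] at h2

lemma idealSub_natS_self (S : NumSgp) : idealSub (natS S) (natS S) = natS S := by
  ext x
  constructor
  · intro hx
    have := hx 0 (natS_zero S)
    simpa using this
  · intro hx j hj
    exact natS_add hx hj

lemma vOp_natS (S : NumSgp) : vOp S (natS S) = natS S := by
  unfold vOp
  rw [idealSub_natS_self, idealSub_natS_self]

section WithHT

variable (hev : Even (frob S))
variable (hT : Tset S = {((frob S : ℕ) : ℤ), ((frob S / 2 : ℕ) : ℤ)})

include hT

lemma frob_mem_T : ((frob S : ℕ) : ℤ) ∈ Tset S := by
  rw [hT]; exact Set.mem_insert _ _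

lemma half_mem_T : ((frob S / 2 : ℕ) : ℤ) ∈ Tset S := by
  rw [hT]; right; rfl

lemma frob_not_natS : ((frob S : ℕ) : ℤ) ∉ natS S := (frob_mem_T hT).2

lemma half_not_natS : ((frob S / 2 : ℕ) : ℤ) ∉ natS S := (half_mem_T hT).2

lemma frob_add_mem {m : ℤ} (hm : m ∈ natS S) (hm0 : m ≠ 0) :
    ((frob S : ℕ) : ℤ) + m ∈ natS S :=
  (frob_mem_T hT).1 m (mem_Mimg hm hm0)

lemma half_add_mem {m : ℤ} (hm : m ∈ natS S) (hm0 : m ≠ 0) :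
    ((frob S / 2 : ℕ) : ℤ) + m ∈ natS S :=
  (half_mem_T hT).1 m (mem_Mimg hm hm0)

lemma frob_ne_zero : frob S ≠ 0 := by
  intro h0
  have := frob_not_natS hT
  rw [h0] at this
  exact this (natS_zero S)

include hev

lemma frob_eq_two_half : ((frob S : ℕ) : ℤ) = 2 * ((frob S / 2 : ℕ) : ℤ) := by
  obtain ⟨k, hk⟩ := hev
  have h2 : frob S / 2 = k := by omega
  rw [h2, hk]
  push_cast
  ring

lemma half_ne_frob : ((frob S / 2 : ℕ) : ℤ) ≠ ((frob S : ℕ) : ℤ) := by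
  have h1 := frob_eq_two_half hev hT
  have h2 := frob_ne_zero hT
  intro he
  rw [← he] at h1
  have : ((frob S / 2 : ℕ) : ℤ) = 0 := by omega
  have : (frob S : ℤ) = 0 := by omega
  exact h2 (by exact_mod_cast this)

/-- Pseudosymmetry: every gap other than `g/2` is `g`-complemented. -/
lemma pseudoP {a : ℤ} (ha : 0 ≤ a) (hna : a ∉ natS S)
    (hah : a ≠ ((frob S / 2 : ℕ) : ℤ)) : (frob S : ℤ) - a ∈ natS S := by
  obtain ⟨t, ht, hts⟩ := reach_T ((frob S : ℤ) - a).toNat a ha hna le_rfl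
  rw [hT] at ht
  rcases ht with ht | ht
  · rwa [← ht]
  · rw [Set.mem_singleton_iff] at ht
    subst ht
    have hne : ((frob S / 2 : ℕ) : ℤ) - a ≠ 0 := by
      intro h0
      exact hah (by omega)
    have h2 := half_add_mem hT hts hne
    have he : ((frob S / 2 : ℕ) : ℤ) + (((frob S / 2 : ℕ) : ℤ) - a) = (frob S : ℤ) - a := by
      have := frob_eq_two_half hev hT
      omega
    rwa [he] at h2

/-- Lemma B: a nonmember of `J` that lies in `J^v` must be `g/2` plus an element of `J`. -/
lemma lemB {J : Set ℤ} (hSJ : natS S ⊆ J) (hJN : J ⊆ {x : ℤ | 0 ≤ x})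
    (hJid : ∀ j ∈ J, ∀ s ∈ natS S, j + s ∈ J)
    {a : ℤ} (hav : a ∈ vOp S J) (haJ : a ∉ J) :
    ∃ i ∈ J, a = ((frob S / 2 : ℕ) : ℤ) + i := by
  by_contra hc
  push_neg at hc
  have hg_not := frob_not_natS hT
  have ha0 : 0 ≤ a := by
    by_contra ha0
    push_neg at ha0
    have hy : (frob S : ℤ) - a ∈ idealSub (natS S) J := by
      intro j hj
      have hj0 : 0 ≤ j := hJN hj
      exact mem_gt_frob (by omega)
    have h2 := hav _ hy
    have he : a + ((frob S : ℤ) - a) = (frob S : ℤ) := by ring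
    rw [he] at h2
    exact hg_not h2
  have hanS : a ∉ natS S := fun h => haJ (hSJ h)
  have hag : a ≤ (frob S : ℤ) := gap_le_frob ha0 hanS
  have hy : (frob S : ℤ) - a ∈ idealSub (natS S) J := by
    intro j hj
    have hj0 : 0 ≤ j := hJN hj
    by_cases hlt : a - j < 0
    · exact mem_gt_frob (by omega)
    · push_neg at hlt
      have hajS : a - j ∉ natS S := by
        intro hsj
        have := hJid j hj _ hsj
        have he : j + (a - j) = a := by ring
        rw [he] at this
        exact haJ this
      have hajh : a - j ≠ ((frob S / 2 : ℕ) : ℤ) := by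
        intro he
        exact absurd (by omega : a = ((frob S / 2 : ℕ) : ℤ) + j) (hc j hj)
      have := pseudoP hev hT (by omega) hajS hajh
      have he : (frob S : ℤ) - (a - j) = (frob S : ℤ) - a + j := by ring
      rwa [he] at this
  have h2 := hav _ hy
  have he : a + ((frob S : ℤ) - a) = (frob S : ℤ) := by ring
  rw [he] at h2
  exact hg_not h2

/-- The key closure argument: if `J ∈ F₀` satisfies the `H` condition then `J` is divisorial. -/
lemma divisorial_of_H {J : Set ℤ} (hJ : J ∈ F0 S)
    (hH : ∀ y ∈ J, y + (frob S : ℤ) ∈ J → y + ((frob S / 2 : ℕ) : ℤ) ∈ J) :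
    Divisorial S J := by
  obtain ⟨⟨hne, hbdd, hJid⟩, hSJ, hJN⟩ := hJ
  have hsub : J ⊆ vOp S J := by
    intro x hx y hy
    have := hy x hx
    rwa [add_comm] at this
  refine Set.Subset.antisymm ?_ hsub
  intro a hav
  by_contra haJ
  obtain ⟨i, hiJ, hie⟩ := lemB hev hT hSJ hJN hJid hav haJ
  by_cases hi0 : i = 0
  · -- a = g/2
    subst hi0
    have ha : a = ((frob S / 2 : ℕ) : ℤ) := by omega
    have hgJ : (frob S : ℤ) ∉ J := by
      intro hgJ
      have h0 : (0:ℤ) ∈ J := hSJ (natS_zero S)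
      have := hH 0 h0 (by simpa using hgJ)
      rw [zero_add] at this
      exact haJ (ha ▸ this)
    have hgv : (frob S : ℤ) ∉ vOp S J := by
      intro hgv
      obtain ⟨i', hi'J, hi'e⟩ := lemB hev hT hSJ hJN hJid hgv hgJ
      have h2 := frob_eq_two_half hev hT
      have : i' = ((frob S / 2 : ℕ) : ℤ) := by omega
      rw [this] at hi'J
      exact haJ (ha ▸ hi'J)
    have hex : ∃ y ∈ idealSub (natS S) J, (frob S : ℤ) + y ∉ natS S := by
      by_contra hc
      push_neg at hc
      exact hgv hc
    obtain ⟨y, hy, hgy⟩ := hex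
    have hyS : y ∈ natS S := by
      have := hy 0 (hSJ (natS_zero S))
      simpa using this
    have hy0 : 0 ≤ y := natS_nonneg hyS
    have hg0 : (0:ℤ) ≤ (frob S : ℤ) := Int.natCast_nonneg _
    have hle : (frob S : ℤ) + y ≤ (frob S : ℤ) := gap_le_frob (by omega) hgy
    have hy00 : y = 0 := by omega
    subst hy00
    have hJS : J ⊆ natS S := by
      intro j hj
      have := hy j hj
      simpa using this
    have hJeq : J = natS S := Set.Subset.antisymm hJS hSJ
    rw [hJeq, vOp_natS] at hav
    exact (half_not_natS hT) (ha ▸ hav)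
  · -- i ≥ 1
    have hi0' : 0 ≤ i := hJN hiJ
    have hig : i + (frob S : ℤ) ∈ J := hSJ (mem_gt_frob (by omega))
    have := hH i hiJ hig
    rw [add_comm] at this
    exact haJ (hie ▸ this)

end WithHT

end PseudoSymHelpers

/-- If `S` is pseudosymmetric, `S ∪ {g}` is the unique minimal element of `(G₀(S), ≤⋆)`:
it belongs to `G₀(S)` and is `⋆_J`-closed for every `J ∈ G₀(S)`. -/
theorem pseudosymmetric_min (S : NumSgp) (hev : Even (frob S))
    (hT : Tset S = {((frob S : ℕ) : ℤ), ((frob S / 2 : ℕ) : ℤ)}) :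
    (natS S ∪ {(frob S : ℤ)}) ∈ G0 S ∧
    ∀ J ∈ G0 S, starle S (natS S ∪ {(frob S : ℤ)}) J := by
  set g : ℤ := ((frob S : ℕ) : ℤ) with hgdef
  set h : ℤ := ((frob S / 2 : ℕ) : ℤ) with hhdef
  have hg0 : (0:ℤ) ≤ g := Int.natCast_nonneg _
  have hh0 : (0:ℤ) ≤ h := Int.natCast_nonneg _
  have hgn := frob_not_natS hT
  have hhn := half_not_natS hT
  have hhg : h ≠ g := half_ne_frob hev hT
  -- I₀ := natS S ∪ {g} basic facts
  have hI0sub : natS S ⊆ natS S ∪ {g} := Set.subset_union_left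
  have hI0N : (natS S ∪ {g}) ⊆ {x : ℤ | 0 ≤ x} := by
    rintro x (hx | hx)
    · exact natS_nonneg hx
    · simp only [Set.mem_singleton_iff] at hx
      simpa [hx] using hg0
  have hI0id : ∀ i ∈ natS S ∪ {g}, ∀ s ∈ natS S, i + s ∈ natS S ∪ {g} := by
    rintro i (hi | hi) s hs
    · exact Or.inl (natS_add hi hs)
    · simp only [Set.mem_singleton_iff] at hi
      subst hi
      by_cases hs0 : s = 0
      · right; simp [hs0]
      · exact Or.inl (frob_add_mem hT hs hs0)
  have hMI0 : ∀ m ∈ Mimg S, m ∈ idealSub (natS S) (natS S ∪ {g}) := by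
    rintro m hm i (hi | hi)
    · exact natS_add (Mimg_subset hm).1 hi
    · simp only [Set.mem_singleton_iff] at hi
      subst hi
      rw [add_comm]
      exact (frob_mem_T hT).1 m hm
  have hvI0 : vOp S (natS S ∪ {g}) ⊆ natS S ∪ {g, h} := by
    intro x hx
    by_cases hxS : x ∈ natS S
    · exact Or.inl hxS
    · right
      have hxT : x ∈ Tset S := by
        refine ⟨?_, hxS⟩
        intro m hm
        exact hx m (hMI0 m hm)
      rw [hT] at hxT
      exact hxT
  have hhvI0 : h ∈ vOp S (natS S ∪ {g}) := by
    intro y hy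
    have hyS : y ∈ natS S := by
      have := hy 0 (Or.inl (natS_zero S))
      simpa using this
    have hy0 : y ≠ 0 := by
      intro h0
      subst h0
      have := hy g (Or.inr rfl)
      rw [zero_add] at this
      exact hgn this
    exact half_add_mem hT hyS hy0
  have hhnI0 : h ∉ natS S ∪ {g} := by
    rintro (hc | hc)
    · exact hhn hc
    · exact hhg hc
  have hG0 : (natS S ∪ {g}) ∈ G0 S := by
    refine ⟨⟨⟨⟨0, Or.inl (natS_zero S)⟩, ⟨0, fun x hx => hI0N hx⟩, hI0id⟩, hI0sub, hI0N⟩, ?_⟩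
    intro hdiv
    rw [Divisorial] at hdiv
    rw [hdiv] at hhvI0
    exact hhnI0 hhvI0
  refine ⟨hG0, ?_⟩
  rintro J ⟨⟨⟨hne, hbdd, hJid⟩, hSJ, hJN⟩, hnd⟩
  rw [starle]
  refine Set.Subset.antisymm ?_ ?_
  · rintro x ⟨hxv, hxJ⟩
    rcases hvI0 hxv with hxS | hxgh
    · exact Or.inl hxS
    · rcases hxgh with hxg | hxh
      · exact Or.inr hxg
      · -- x = h : derive a contradiction
        exfalso
        simp only [Set.mem_singleton_iff] at hxh
        subst hxh
        have hH : ∀ y ∈ J, y + g ∈ J → y + h ∈ J := by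
          intro y hyJ hyg
          have hy : y ∈ idealSub J (natS S ∪ {g}) := by
            rintro i (hi | hi)
            · exact hJid y hyJ i hi
            · simp only [Set.mem_singleton_iff] at hi
              subst hi
              exact hyg
          have := hxJ y hy
          rwa [add_comm] at this
        exact hnd (divisorial_of_H hev hT ⟨⟨hne, hbdd, hJid⟩, hSJ, hJN⟩ hH)
  · intro x hx
    constructor
    · intro y hy
      have := hy x hx
      rwa [add_comm] at this
    · intro y hy
      have := hy x hx
      rwa [add_comm] at this
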